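/- Let U be a 2-dimensional complex vector space and ε a nonzero element of Λ²U*. Then the real vector space H of Hermitian elements of U ⊗ conj(U) is 4-dimensional, and the symmetric real bilinear form g on H characterized by g(u⊗conj(u), v⊗conj(v)) = ε(u,v)·conj(ε)(conj(u),conj(v)) for all u, v ∈ U is well defined and has Lorentzian signature (1,3). -/

import Mathlib

/-!
Identify `U ⊗ conj(U)` with `2 × 2` complex matrices. Then `g(M, N) = |c|² (tr M tr N - tr (MN))`
is `|c|²` times the polarised determinant, so `g(u ⊗ ū, v ⊗ v̄) = |c|² |det (u v)|²`. Every
Hermitian matrix is a real combination of tensors `u ⊗ ū`, which makes `g` unique on `H`, and in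
coordinates `M = x₀ σ₀ + x₁ σ₁ + x₂ σ₂ + x₃ σ₃` for the Pauli matrices `σᵢ` one has
`det M = x₀² - x₁² - x₂² - x₃²`, so the rescaled Pauli matrices are a `g`-orthonormal basis of
signature `(1, 3)`.
-/

open Matrix

noncomputable section

/-- The 2-spinor space `U`, modelled as `ℂ²` via a basis. -/
abbrev U2 := Fin 2 → ℂ

/-- `U ⊗ conj(U)` modelled as 2×2 complex matrices. -/
abbrev M2 := Matrix (Fin 2) (Fin 2) ℂ

/-- A complex symplectic form on `U`: any nonzero element of `Λ²U*` is
`ε_c(u,v) = c·(u⁰v¹ − u¹v⁰)` for some `c ≠ 0`. -/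
def epsBil (c : ℂ) (u v : U2) : ℂ := c * (u 0 * v 1 - u 1 * v 0)

/-- The decomposable Hermitian tensor `u ⊗ conj(u)`. -/
def outerH (u : U2) : M2 := fun A B => u A * star (u B)

/-- Hermitian elements of `U ⊗ conj(U)`. -/
def IsHerm (M : M2) : Prop := Mᴴ = M

lemma LinearMap.eqOn_span₂ {R M N P : Type*} [CommSemiring R] [AddCommMonoid M]
    [AddCommMonoid N] [AddCommMonoid P] [Module R M] [Module R N] [Module R P]
    {B B' : M →ₗ[R] N →ₗ[R] P} {s : Set M} {t : Set N} (h : ∀ x ∈ s, ∀ y ∈ t, B x y = B' x y)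
    {x : M} {y : N} (hx : x ∈ Submodule.span R s) (hy : y ∈ Submodule.span R t) :
    B x y = B' x y :=
  have hs : ∀ x ∈ s, B x y = B' x y := fun x hxs => eqOn_span (h x hxs) hy
  eqOn_span (f := B.flip y) (g := B'.flip y) hs hx

namespace Matrix

variable {n R : Type*} [Fintype n] [CommRing R]

def traceForm : LinearMap.BilinForm R (Matrix n n R) :=
  LinearMap.mk₂ R (fun M N => M.trace * N.trace - (M * N).trace)
    (fun M M' N => by simp only [trace_add, add_mul]; ring)
    (fun r M N => by simp only [trace_smul, smul_mul_assoc, smul_eq_mul]; ring)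
    (fun M N N' => by simp only [trace_add, mul_add]; ring)
    (fun r M N => by simp only [trace_smul, mul_smul_comm, smul_eq_mul]; ring)

@[simp]
lemma traceForm_apply (M N : Matrix n n R) :
    traceForm M N = M.trace * N.trace - (M * N).trace := rfl

lemma traceForm_comm (M N : Matrix n n R) : traceForm M N = traceForm N M := by
  rw [traceForm_apply, traceForm_apply, trace_mul_comm, mul_comm M.trace]

lemma star_traceForm [StarRing R] {M N : Matrix n n R} (hM : Mᴴ = M) (hN : Nᴴ = N) :
    star (traceForm M N) = traceForm M N := by
  simp only [traceForm_apply, star_sub, star_mul', ← trace_conjTranspose, conjTranspose_mul,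
    hM, hN, trace_mul_comm N M]

end Matrix

def lorentzForm (c : ℂ) : LinearMap.BilinForm ℂ M2 := (‖c‖ ^ 2 : ℝ) • traceForm

lemma lorentzForm_apply (c : ℂ) (M N : M2) :
    lorentzForm c M N = (‖c‖ ^ 2 : ℝ) • traceForm M N := rfl

lemma lorentzForm_comm (c : ℂ) (M N : M2) : lorentzForm c M N = lorentzForm c N M := by
  rw [lorentzForm_apply, lorentzForm_apply, traceForm_comm]

lemma star_lorentzForm (c : ℂ) {M N : M2} (hM : IsHerm M) (hN : IsHerm N) :
    star (lorentzForm c M N) = lorentzForm c M N := by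
  rw [lorentzForm_apply, star_smul, star_trivial, star_traceForm hM hN]

lemma lorentzForm_outerH (c : ℂ) (u v : U2) :
    lorentzForm c (outerH u) (outerH v) = epsBil c u v * star (epsBil c u v) := by
  rw [lorentzForm_apply, Complex.real_smul, Complex.ofReal_pow, ← Complex.mul_conj']
  simp only [epsBil, outerH, traceForm_apply, trace_fin_two, mul_apply, Fin.sum_univ_two,
    star_sub, star_mul', RCLike.star_def]
  ring

def pauli : Fin 4 → M2 :=
  ![1, !![0, 1; 1, 0], !![0, -Complex.I; Complex.I, 0], !![1, 0; 0, -1]]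

lemma isHerm_pauli (i : Fin 4) : IsHerm (pauli i) := by
  unfold IsHerm
  fin_cases i <;> ext a b <;> fin_cases a <;> fin_cases b <;> simp [pauli]

lemma traceForm_pauli (i j : Fin 4) :
    traceForm (pauli i) (pauli j) = if i = j then (if i = 0 then 2 else -2) else 0 := by
  fin_cases i <;> fin_cases j <;> simp [pauli, trace_fin_two] <;> norm_num

lemma mem_span_pauli {M : M2} (hM : IsHerm M) : M ∈ Submodule.span ℝ (Set.range pauli) := by
  have hM' (a b : Fin 2) : M b a = star (M a b) := by
    rw [← conjTranspose_apply, show Mᴴ = M from hM]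
  have h00 : (M 0 0).im = 0 := Complex.conj_eq_iff_im.mp (hM' 0 0).symm
  have h11 : (M 1 1).im = 0 := Complex.conj_eq_iff_im.mp (hM' 1 1).symm
  have hdecomp : M = ∑ i, ![((M 0 0).re + (M 1 1).re) / 2, (M 0 1).re, -(M 0 1).im,
      ((M 0 0).re - (M 1 1).re) / 2] i • pauli i := by
    ext a b
    fin_cases a <;> fin_cases b <;>
      simp [Fin.sum_univ_four, pauli, Complex.ext_iff, hM' 0 1, h00, h11] <;> ring
  rw [hdecomp]
  exact Submodule.sum_mem _ fun i _ => Submodule.smul_mem _ _ (Submodule.subset_span ⟨i, rfl⟩)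

lemma pauli_mem_span_outerH (i : Fin 4) :
    pauli i ∈ Submodule.span ℝ (Set.range outerH) := by
  have mem (u : U2) : outerH u ∈ Submodule.span ℝ (Set.range outerH) :=
    Submodule.subset_span ⟨u, rfl⟩
  have h0 : pauli 0 = outerH ![1, 0] + outerH ![0, 1] := by
    ext a b; fin_cases a <;> fin_cases b <;> simp [pauli, outerH]
  have h0mem := h0 ▸ add_mem (mem ![1, 0]) (mem ![0, 1])
  fin_cases i
  · exact h0mem
  · have : pauli 1 = outerH ![1, 1] - pauli 0 := by
      ext a b; fin_cases a <;> fin_cases b <;> simp [pauli, outerH]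
    exact this ▸ sub_mem (mem _) h0mem
  · have : pauli 2 = outerH ![1, Complex.I] - pauli 0 := by
      ext a b; fin_cases a <;> fin_cases b <;> simp [pauli, outerH]
    exact this ▸ sub_mem (mem _) h0mem
  · have : pauli 3 = outerH ![1, 0] - outerH ![0, 1] := by
      ext a b; fin_cases a <;> fin_cases b <;> simp [pauli, outerH]
    exact this ▸ sub_mem (mem _) (mem _)

lemma mem_span_outerH {M : M2} (hM : IsHerm M) : M ∈ Submodule.span ℝ (Set.range outerH) :=
  Submodule.span_le.mpr (Set.range_subset_iff.mpr pauli_mem_span_outerH) (mem_span_pauli hM)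

def lorentzBasis (c : ℂ) (i : Fin 4) : M2 := (√2 * ‖c‖)⁻¹ • pauli i

lemma lorentzForm_lorentzBasis {c : ℂ} (hc : c ≠ 0) (i j : Fin 4) :
    lorentzForm c (lorentzBasis c i) (lorentzBasis c j) =
      if i = j then (if i = 0 then 1 else -1) else 0 := by
  have hscale : (√2 * ‖c‖)⁻¹ * (√2 * ‖c‖)⁻¹ * ‖c‖ ^ 2 = 2⁻¹ := by
    have : ‖c‖ ≠ 0 := norm_ne_zero_iff.mpr hc
    field_simp
    rw [Real.sq_sqrt zero_le_two]
  calc lorentzForm c (lorentzBasis c i) (lorentzBasis c j)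
      = (((√2 * ‖c‖)⁻¹ * (√2 * ‖c‖)⁻¹ * ‖c‖ ^ 2 : ℝ) : ℂ) * traceForm (pauli i) (pauli j) := by
        simp only [lorentzBasis, LinearMap.map_smul_of_tower, LinearMap.smul_apply,
          lorentzForm_apply, Complex.real_smul]
        push_cast
        ring
    _ = if i = j then (if i = 0 then 1 else -1) else 0 := by
        rw [hscale, traceForm_pauli]
        split_ifs <;> norm_num

lemma isHerm_lorentzBasis (c : ℂ) (i : Fin 4) : IsHerm (lorentzBasis c i) := by
  rw [IsHerm, lorentzBasis, conjTranspose_smul, star_trivial, isHerm_pauli i]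

lemma linearIndependent_lorentzBasis {c : ℂ} (hc : c ≠ 0) :
    LinearIndependent ℝ (lorentzBasis c) :=
  LinearIndependent.restrict_scalars' ℝ <|
    LinearMap.BilinForm.linearIndependent_of_iIsOrtho (B := lorentzForm c)
      (fun i j hij => (lorentzForm_lorentzBasis hc i j).trans (if_neg hij))
      (fun i => by rw [lorentzForm_lorentzBasis hc, if_pos rfl]; split_ifs <;> norm_num)

lemma span_lorentzBasis {c : ℂ} (hc : c ≠ 0) :
    Submodule.span ℝ (Set.range (lorentzBasis c)) = Submodule.span ℝ (Set.range pauli) := by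
  change Submodule.span ℝ (Set.range fun i => _ • pauli i) = _
  rw [Set.range_smul, Submodule.span_smul_eq_of_isUnit]
  simpa using hc

theorem hermitian_space_lorentz_metric (c : ℂ) (hc : c ≠ 0) :
    ∃ g : M2 → M2 → ℂ,
      -- real bilinearity
      (∀ M N P : M2, g (M + N) P = g M P + g N P) ∧
      (∀ M N P : M2, g M (N + P) = g M N + g M P) ∧
      (∀ (t : ℝ) (M N : M2), g (t • M) N = t • g M N) ∧
      (∀ (t : ℝ) (M N : M2), g M (t • N) = t • g M N) ∧
      -- the characterizing property on decomposable Hermitian tensors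
      (∀ u v : U2, g (outerH u) (outerH v) = epsBil c u v * star (epsBil c u v)) ∧
      -- g is symmetric and real-valued on Hermitian elements
      (∀ M N : M2, IsHerm M → IsHerm N → g M N = g N M ∧ star (g M N) = g M N) ∧
      -- well-definedness: any real-bilinear form with the same characterizing
      -- values agrees with g on Hermitian elements
      (∀ g' : M2 → M2 → ℂ,
        (∀ M N P : M2, g' (M + N) P = g' M P + g' N P) →
        (∀ M N P : M2, g' M (N + P) = g' M N + g' M P) →
        (∀ (t : ℝ) (M N : M2), g' (t • M) N = t • g' M N) →
        (∀ (t : ℝ) (M N : M2), g' M (t • N) = t • g' M N) →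
        (∀ u v : U2, g' (outerH u) (outerH v)
            = epsBil c u v * star (epsBil c u v)) →
        ∀ M N : M2, IsHerm M → IsHerm N → g' M N = g M N) ∧
      -- H is 4-dimensional and g has Lorentzian signature (1,3):
      -- there is a basis b of H which is g-orthogonal with signs (+,−,−,−)
      (∃ b : Fin 4 → M2,
        (∀ i, IsHerm (b i)) ∧
        LinearIndependent ℝ b ∧
        (∀ M : M2, IsHerm M → M ∈ Submodule.span ℝ (Set.range b)) ∧
        (∀ i j, g (b i) (b j) =
          if i = j then (if i = 0 then 1 else -1) else 0)) := by
  refine ⟨fun M N => lorentzForm c M N, LinearMap.map_add₂ _, fun M => map_add _,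
    fun t M N => by simp, fun t M N => by simp, lorentzForm_outerH c,
    fun M N hM hN => ⟨lorentzForm_comm c M N, star_lorentzForm c hM hN⟩, ?_,
    lorentzBasis c, isHerm_lorentzBasis c, linearIndependent_lorentzBasis hc,
    fun M hM => span_lorentzBasis hc ▸ mem_span_pauli hM, lorentzForm_lorentzBasis hc⟩
  intro g' hadd_left hadd_right hsmul_left hsmul_right hg' M N hM hN
  refine LinearMap.eqOn_span₂
    (B := LinearMap.mk₂ ℝ g' hadd_left hsmul_left hadd_right hsmul_right)
    (B' := (lorentzForm c).restrictScalars₁₂ ℝ ℝ) ?_ (mem_span_outerH hM) (mem_span_outerH hN)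
  rintro _ ⟨u, rfl⟩ _ ⟨v, rfl⟩
  exact (hg' u v).trans (lorentzForm_outerH c u v).symm
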